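/- arXiv:1908.02907 — 7 statements merged into one kernel-verified Lean document; each statement's English description precedes it below -/
import Mathlib

section
/- For an n×n skew-symmetrizable integer matrix B = (b_ij) and an index k ∈ [1,n], the mutated matrix satisfies μ_k(B) = (J_k + E_k) B (J_k + F_k), where J_k is the n×n diagonal matrix whose diagonal entries are all 1 except for −1 in the k-th position, E_k is the n×n matrix whose only nonzero entries are e_{ik} = [−b_{ik}]_+ (in column k), and F_k is the n×n matrix whose only nonzero entries are f_{kj} = [b_{kj}]_+ (in row k). -/
open Matrix

/-- For `x : ℤ`, `[x]₊ = max x 0`.  The mutation of an `n × n` integer matrix `B` at index `k`: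
`μ_k(B)_{ij} = -b_{ij}` if `i = k` or `j = k`, and
`b_{ij} + sgn(b_{ik})·[b_{ik} b_{kj}]₊` otherwise. -/
def mutate {n : Type*} [DecidableEq n] (B : Matrix n n ℤ) (k : n) : Matrix n n ℤ :=
  Matrix.of fun i j =>
    if i = k ∨ j = k then -B i j
    else B i j + Int.sign (B i k) * max (B i k * B k j) 0

/-- `B` is skew-symmetrizable if there is a diagonal integer matrix `D` with positive diagonal
entries such that `B * D` is skew-symmetric. -/
def IsSkewSymmetrizable {n : Type*} [DecidableEq n] [Fintype n] (B : Matrix n n ℤ) : Prop :=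
  ∃ d : n → ℤ, (∀ i, 0 < d i) ∧
    (B * Matrix.diagonal d)ᵀ = -(B * Matrix.diagonal d)

/-- For a skew-symmetrizable integer matrix `B` and an index `k`, we have
`μ_k(B) = (J_k + E_k) B (J_k + F_k)` where `J_k` is diagonal with `1`s except `-1` in
position `k`, `E_k` has only nonzero entries `e_{ik} = [-b_{ik}]₊` (in column `k`),
and `F_k` has only nonzero entries `f_{kj} = [b_{kj}]₊` (in row `k`). -/

private lemma mutation_key_scalar (a c : ℤ) :
    max (-a) 0 * c + a * max c 0 = a.sign * max (a*c) 0 := by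
  rcases lt_trichotomy a 0 with ha|ha|ha <;> rcases le_or_gt c 0 with hc|hc
  · rw [max_eq_left (by omega), max_eq_right hc, max_eq_left (by nlinarith),
      Int.sign_eq_neg_one_of_neg ha]; ring
  · rw [max_eq_left (by omega), max_eq_left hc.le, max_eq_right (by nlinarith),
      Int.sign_eq_neg_one_of_neg ha]; ring
  · simp [ha]
  · simp [ha]
  · rw [max_eq_right (by omega), max_eq_right hc, max_eq_right (by nlinarith),
      Int.sign_eq_one_of_pos ha]; ring
  · rw [max_eq_right (by omega), max_eq_left hc.le, max_eq_left (by nlinarith),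
      Int.sign_eq_one_of_pos ha]; ring

/-- theorem statement below -/
theorem mutation_matrix_factorization {m : ℕ} (B : Matrix (Fin m) (Fin m) ℤ)
    (hB : IsSkewSymmetrizable B) (k : Fin m) :
    mutate B k =
      (Matrix.diagonal (fun i => if i = k then (-1 : ℤ) else 1) +
        Matrix.of (fun i j => if j = k then max (-(B i k)) 0 else 0)) * B *
      (Matrix.diagonal (fun i => if i = k then (-1 : ℤ) else 1) +
        Matrix.of (fun i j => if i = k then max (B k j) 0 else 0)) := by
  obtain ⟨d, hd, hskew⟩ := hB
  have hkk : B k k = 0 := by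
    have h := congrFun (congrFun hskew k) k
    simp only [Matrix.transpose_apply, Matrix.neg_apply, Matrix.mul_diagonal,
      Matrix.mul_apply, Matrix.diagonal_apply, mul_ite, mul_zero,
      Finset.sum_ite_eq', Finset.mem_univ, if_true] at h
    have hdk := hd k
    nlinarith [h]
  have hentry : ∀ i j : Fin m,
      ((Matrix.diagonal (fun i => if i = k then (-1 : ℤ) else 1) +
          Matrix.of (fun i j => if j = k then max (-(B i k)) 0 else 0)) * B *
        (Matrix.diagonal (fun i => if i = k then (-1 : ℤ) else 1) +
          Matrix.of (fun i j => if i = k then max (B k j) 0 else 0))) i j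
      = (if i = k then (-1:ℤ) else 1) * ((if j = k then (-1:ℤ) else 1) * B i j)
        + (if j = k then (-1:ℤ) else 1) * (max (-(B i k)) 0 * B k j)
        + (if i = k then (-1:ℤ) else 1) * (B i k * max (B k j) 0) := by
    intro i j
    have h1 : ((Matrix.diagonal (fun i => if i = k then (-1 : ℤ) else 1) +
          Matrix.of (fun i j => if j = k then max (-(B i k)) 0 else 0)) * B)
        = Matrix.of fun i l =>
            (if i = k then (-1:ℤ) else 1) * B i l + max (-(B i k)) 0 * B k l := by
      ext i l
      simp [Matrix.mul_apply, Matrix.add_apply, Matrix.diagonal_apply, add_mul, ite_mul,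
        Finset.sum_add_distrib, Finset.sum_ite_eq]
    rw [h1]
    simp only [Matrix.mul_apply, Matrix.add_apply, Matrix.of_apply, Matrix.diagonal_apply,
      mul_add, mul_ite, mul_zero, mul_one, mul_neg, Finset.sum_add_distrib,
      Finset.sum_ite_eq, Finset.sum_ite_eq', Finset.mem_univ, if_true, hkk]
    by_cases hi : i = k <;> by_cases hj : j = k <;> simp [hi, hj, hkk]
  ext i j
  rw [hentry i j]
  by_cases hi : i = k <;> by_cases hj : j = k <;>
    simp [mutate, hi, hj, hkk]
  · linarith [mutation_key_scalar (B i k) (B k j)]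
end

section
/- If D is a diagonal integer matrix with positive diagonal entries such that BD is skew-symmetric (i.e., D is a skew-symmetrizer of the n×n integer matrix B), then for every k ∈ [1,n] the matrix μ_k(B)·D is also skew-symmetric; in particular, a skew-symmetrizer of B is a skew-symmetrizer of every matrix obtained from B by a sequence of mutations. -/
open Matrix

/-- Applying a finite sequence of mutations `μ_{k_s} ∘ ⋯ ∘ μ_{k_1}` to `B`. -/
def mutateSeq {n : Type*} [DecidableEq n] (B : Matrix n n ℤ) (l : List n) : Matrix n n ℤ :=
  l.foldl mutate B

/-! The skew-symmetry relation `b_ji d_i = -b_ij d_j` survives the sign flips in row and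
column `k`; for the other entries it suffices that the correction terms satisfy the same relation.
From `b_jk d_k = -b_kj d_j` and `b_ki d_i = -b_ik d_k` one gets `sgn b_jk = -sgn b_kj` and
`b_jk b_ki d_i = b_ik b_kj d_j`, and `sgn b_kj` may be replaced by `sgn b_ik` wherever
`[b_ik b_kj]₊ ≠ 0`. -/

theorem Int.sign_mul_max_mul_zero_comm (a b : ℤ) :
    a.sign * max (a * b) 0 = b.sign * max (a * b) 0 := by
  rcases le_or_gt (a * b) 0 with hab | hab
  · simp [max_eq_right hab]
  · rcases pos_and_pos_or_neg_and_neg_of_mul_pos hab with ⟨ha, hb⟩ | ⟨ha, hb⟩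
    · rw [Int.sign_eq_one_of_pos ha, Int.sign_eq_one_of_pos hb]
    · rw [Int.sign_eq_neg_one_of_neg ha, Int.sign_eq_neg_one_of_neg hb]

theorem Int.sign_eq_neg_sign_of_mul_eq_neg_mul {a b p q : ℤ} (hp : 0 < p) (hq : 0 < q)
    (h : a * p = -(b * q)) : a.sign = -b.sign := by
  simpa [Int.sign_mul, Int.sign_eq_one_of_pos hp, Int.sign_eq_one_of_pos hq]
    using congrArg Int.sign h

theorem Matrix.transpose_mul_diagonal_eq_neg_iff {n R : Type*} [DecidableEq n] [Fintype n]
    [CommRing R] (B : Matrix n n R) (d : n → R) :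
    (B * diagonal d)ᵀ = -(B * diagonal d) ↔ ∀ i j, B j i * d i = -(B i j * d j) := by
  simp [← Matrix.ext_iff, Matrix.mul_diagonal, mul_comm (d _)]

section
variable {n : Type*} {B : Matrix n n ℤ} {d : n → ℤ}

theorem sign_mul_max_mul_zero_mul_skew (hd : ∀ i, 0 < d i)
    (hB : ∀ i j, B j i * d i = -(B i j * d j)) (i j k : n) :
    (B j k).sign * max (B j k * B k i) 0 * d i = -((B i k).sign * max (B i k * B k j) 0 * d j) := by
  have hsign : (B j k).sign = -(B k j).sign :=
    Int.sign_eq_neg_sign_of_mul_eq_neg_mul (hd k) (hd j) (hB k j)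
  have hprod : B j k * B k i * d i = B i k * B k j * d j := by
    refine mul_right_cancel₀ (hd k).ne' ?_
    linear_combination (B k i * d i) * hB k j - (B k j * d j) * hB i k
  calc (B j k).sign * max (B j k * B k i) 0 * d i
      = (B j k).sign * max (B j k * B k i * d i) 0 := by
        rw [mul_assoc, max_mul_of_nonneg _ _ (hd i).le, zero_mul]
    _ = -((B k j).sign * max (B i k * B k j) 0 * d j) := by
        rw [hprod, hsign, mul_assoc _ (max _ _), max_mul_of_nonneg _ _ (hd j).le, zero_mul]; ring
    _ = -((B i k).sign * max (B i k * B k j) 0 * d j) := by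
        rw [Int.sign_mul_max_mul_zero_comm]

variable [DecidableEq n]

theorem mutate_apply_mul_skew (hd : ∀ i, 0 < d i)
    (hB : ∀ i j, B j i * d i = -(B i j * d j)) (k i j : n) :
    mutate B k j i * d i = -(mutate B k i j * d j) := by
  have hB' := hB i j
  by_cases hij : i = k ∨ j = k
  · simp only [mutate, of_apply, if_pos hij, if_pos hij.symm]
    linear_combination -hB'
  · simp only [mutate, of_apply, if_neg hij, if_neg (mt Or.symm hij)]
    linear_combination hB' + sign_mul_max_mul_zero_mul_skew hd hB i j k

variable [Fintype n]

theorem transpose_mutate_mul_diagonal_eq_neg (hd : ∀ i, 0 < d i)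
    (h : (B * diagonal d)ᵀ = -(B * diagonal d)) (k : n) :
    (mutate B k * diagonal d)ᵀ = -(mutate B k * diagonal d) := by
  rw [transpose_mul_diagonal_eq_neg_iff] at h ⊢
  exact mutate_apply_mul_skew hd h k

theorem transpose_mutateSeq_mul_diagonal_eq_neg (hd : ∀ i, 0 < d i)
    (h : (B * diagonal d)ᵀ = -(B * diagonal d)) (l : List n) :
    (mutateSeq B l * diagonal d)ᵀ = -(mutateSeq B l * diagonal d) := by
  induction l generalizing B with
  | nil => exact h
  | cons k l ih => exact ih (transpose_mutate_mul_diagonal_eq_neg hd h k)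
end

/-- If `D = diag d` has positive diagonal entries and `B * D` is skew-symmetric
(`D` is a skew-symmetrizer of `B`), then for every `k` the matrix `μ_k(B) * D`
is also skew-symmetric; in particular `D` is a skew-symmetrizer of every matrix
obtained from `B` by a finite sequence of mutations. -/
theorem skewSymmetrizer_mutation {m : ℕ} (B : Matrix (Fin m) (Fin m) ℤ)
    (d : Fin m → ℤ) (hd : ∀ i, 0 < d i)
    (h : (B * Matrix.diagonal d)ᵀ = -(B * Matrix.diagonal d)) :
    (∀ k : Fin m,
      (mutate B k * Matrix.diagonal d)ᵀ = -(mutate B k * Matrix.diagonal d)) ∧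
    (∀ l : List (Fin m),
      (mutateSeq B l * Matrix.diagonal d)ᵀ = -(mutateSeq B l * Matrix.diagonal d)) := by
  exact ⟨transpose_mutate_mul_diagonal_eq_neg hd h,
    transpose_mutateSeq_mul_diagonal_eq_neg hd h⟩
end

section
/- Let B be a nonzero n×n skew-symmetrizable integer matrix. If B′ is obtained from B by a finite sequence of mutations and B = a·B′ for some integer a, then a = ±1 and B = ±B′. -/
open Matrix

lemma dvd_mutate {n : Type*} [DecidableEq n] (B : Matrix n n ℤ) (k : n) (g : ℤ)
    (hg : ∀ i j, g ∣ B i j) : ∀ i j, g ∣ mutate B k i j := by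
  intro i j
  simp only [mutate, Matrix.of_apply]
  split
  · exact dvd_neg.mpr (hg i j)
  · refine dvd_add (hg i j) (Dvd.dvd.mul_left ?_ _)
    rcases le_or_gt (B i k * B k j) 0 with h | h
    · simp [max_eq_right h]
    · rw [max_eq_left h.le]
      exact (hg i k).mul_right _

lemma dvd_mutateSeq {n : Type*} [DecidableEq n] (B : Matrix n n ℤ) (l : List n) (g : ℤ)
    (hg : ∀ i j, g ∣ B i j) : ∀ i j, g ∣ mutateSeq B l i j := by
  induction l generalizing B with
  | nil => exact hg
  | cons k l ih => exact ih _ (dvd_mutate B k g hg)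

/-- Let `B ≠ 0` be a skew-symmetrizable integer matrix.  If `B'` is obtained from `B` by a
finite sequence of mutations and `B = a • B'` for some integer `a`, then `a = ±1` and
`B = ±B'`. -/
theorem lemma_3_1 {m : ℕ} (B B' : Matrix (Fin m) (Fin m) ℤ) (hB0 : B ≠ 0)
    (hB : IsSkewSymmetrizable B) (l : List (Fin m)) (hB' : B' = mutateSeq B l)
    (a : ℤ) (h : B = a • B') :
    (a = 1 ∨ a = -1) ∧ (B = B' ∨ B = -B') := by
  have key : ∀ N : ℕ, ∀ i j, a ^ N ∣ B i j := by
    intro N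
    induction N with
    | zero => simp
    | succ N ih =>
      intro i j
      have h1 : ∀ i j, a ^ N ∣ B' i j := hB' ▸ dvd_mutateSeq B l _ ih
      have hb : B i j = a * B' i j := by rw [h]; simp
      rw [hb, pow_succ, mul_comm (a ^ N) a]
      exact mul_dvd_mul_left a (h1 i j)
  obtain ⟨i, j, hij⟩ : ∃ i j, B i j ≠ 0 := by
    by_contra hc
    push_neg at hc
    exact hB0 (by ext i j; simp [hc])
  have habs : ∀ N : ℕ, |a| ^ N ≤ |B i j| := by
    intro N
    rw [← abs_pow]
    exact Int.le_of_dvd (abs_pos.mpr hij) ((abs_dvd _ _).mpr (dvd_abs _ _ |>.mpr (key N i j)))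
  have ha0 : a ≠ 0 := by
    intro ha
    have := key 1 i j
    simp [ha] at this
    exact hij this
  have ha1 : |a| = 1 := by
    by_contra hna
    have h2 : 2 ≤ |a| := by
      have := abs_pos.mpr ha0
      omega
    have hcon : ∀ N : ℕ, (2:ℤ) ^ N ≤ |B i j| :=
      fun N => le_trans (pow_le_pow_left₀ (by norm_num) h2 N) (habs N)
    set N := (|B i j|).toNat with hN
    have h3 : (N : ℤ) < 2 ^ N := by exact_mod_cast (Nat.lt_two_pow_self (n := N))
    have h4 : |B i j| = (N : ℤ) := by
      rw [hN, Int.toNat_of_nonneg (abs_nonneg _)]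
    have := hcon N
    omega
  have ha : a = 1 ∨ a = -1 := by
    rcases abs_eq (by norm_num : (0:ℤ) ≤ 1) |>.mp ha1 with h' | h' <;> [left; right] <;> exact h'
  refine ⟨ha, ?_⟩
  rcases ha with rfl | rfl
  · left; simpa using h
  · right; rw [h]; ext i j; simp
end

section
/- Let B = diag(B_1, …, B_s) be a block-diagonal integer matrix where each block B_i is a nonzero indecomposable skew-symmetrizable matrix of size n_i × n_i (with n_1 + ⋯ + n_s = n). If B′ is obtained from B by a finite sequence of mutations and B = B′·A for some diagonal integer matrix A = diag(a_1, …, a_n), then a_j = ±1 for all j ∈ [1,n]. -/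
open Matrix

/-- A square matrix is decomposable if there is a nonempty proper subset `S` of the index set
with `A i j = 0` whenever exactly one of `i`, `j` lies in `S`. -/
def Decomposable {n R : Type*} [Zero R] (A : Matrix n n R) : Prop :=
  ∃ S : Set n, S.Nonempty ∧ Sᶜ.Nonempty ∧
    ∀ i j, ((i ∈ S ∧ j ∉ S) ∨ (i ∉ S ∧ j ∈ S)) → A i j = 0

/-- A common divisor of the `j`-th column is preserved by a single mutation. -/
lemma dvd_col_mutate {n : Type*} [DecidableEq n] (B : Matrix n n ℤ) (k j : n) (d : ℤ)
    (hd : ∀ i, d ∣ B i j) : ∀ i, d ∣ mutate B k i j := by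
  intro i
  simp only [mutate, Matrix.of_apply]
  split
  · exact (hd i).neg_right
  · refine dvd_add (hd i) (Dvd.dvd.mul_left ?_ _)
    rcases max_cases (B i k * B k j) 0 with ⟨h1, _⟩ | ⟨h1, _⟩
    · rw [h1]; exact (hd k).mul_left _
    · rw [h1]; exact dvd_zero d

/-- A common divisor of the `j`-th column is preserved by any sequence of mutations. -/
lemma dvd_col_mutateSeq {n : Type*} [DecidableEq n] (B : Matrix n n ℤ) (l : List n) (j : n)
    (d : ℤ) (hd : ∀ i, d ∣ B i j) : ∀ i, d ∣ mutateSeq B l i j := by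
  induction l generalizing B with
  | nil => exact hd
  | cons k t ih => exact ih _ (dvd_col_mutate B k j d hd)

/-- Let `B = diag(B₁, …, B_s)` be block-diagonal where each block `Bᵢ` is a nonzero
indecomposable skew-symmetrizable integer matrix of size `nᵢ × nᵢ`.  If `B'` is obtained from
`B` by a finite sequence of mutations and `B = B' * A` for some diagonal integer matrix
`A = diag(a₁, …, aₙ)`, then `a_j = ±1` for every `j`. -/
theorem lemma_3_3 {s : ℕ} {n' : Fin s → ℕ}
    (Bs : ∀ i : Fin s, Matrix (Fin (n' i)) (Fin (n' i)) ℤ)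
    (h0 : ∀ i, Bs i ≠ 0)
    (hind : ∀ i, ¬ Decomposable (Bs i))
    (hskew : ∀ i, IsSkewSymmetrizable (Bs i))
    (B' : Matrix (Σ i : Fin s, Fin (n' i)) (Σ i : Fin s, Fin (n' i)) ℤ)
    (l : List (Σ i : Fin s, Fin (n' i)))
    (hB' : B' = mutateSeq (Matrix.blockDiagonal' Bs) l)
    (a : (Σ i : Fin s, Fin (n' i)) → ℤ)
    (h : Matrix.blockDiagonal' Bs = B' * Matrix.diagonal a) :
    ∀ j, a j = 1 ∨ a j = -1 := by
  rintro ⟨i, j'⟩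
  -- the `j'`-th column of `Bs i` is nonzero
  have hcol : ∃ r, Bs i r j' ≠ 0 := by
    by_contra hc
    push_neg at hc
    obtain ⟨d, hdpos, hdskew⟩ := hskew i
    have hrow : ∀ c, Bs i j' c = 0 := by
      intro c
      have hcc := congrFun (congrFun hdskew c) j'
      simp only [Matrix.transpose_apply, Matrix.mul_diagonal, Matrix.neg_apply, hc c,
        zero_mul, neg_zero] at hcc
      exact (mul_eq_zero.mp hcc).resolve_right (hdpos c).ne'
    by_cases hex : ∃ r : Fin (n' i), r ≠ j'
    · obtain ⟨r, hr⟩ := hex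
      refine hind i ⟨{j'}, ⟨j', rfl⟩, ⟨r, hr⟩, ?_⟩
      rintro p q (⟨hp, hq⟩ | ⟨hp, hq⟩)
      · have : p = j' := hp
        rw [this]; exact hrow q
      · have : q = j' := hq
        rw [this]; exact hc p
    · push_neg at hex
      refine h0 i ?_
      funext p q
      rw [hex p]
      exact hrow q
  obtain ⟨r, hr⟩ := hcol
  have hb : Matrix.blockDiagonal' Bs ⟨i, r⟩ ⟨i, j'⟩ ≠ 0 := by
    simpa [Matrix.blockDiagonal'_apply_eq] using hr
  -- all powers of `a ⟨i, j'⟩` divide the `j'`-column of `B`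
  have key : ∀ m : ℕ, ∀ p, a ⟨i, j'⟩ ^ m ∣ Matrix.blockDiagonal' Bs p ⟨i, j'⟩ := by
    intro m
    induction m with
    | zero => simp
    | succ m ih =>
      have h1 : ∀ p, a ⟨i, j'⟩ ^ m ∣ B' p ⟨i, j'⟩ := by
        rw [hB']
        exact dvd_col_mutateSeq _ l _ _ ih
      intro p
      have h2 : Matrix.blockDiagonal' Bs p ⟨i, j'⟩ = B' p ⟨i, j'⟩ * a ⟨i, j'⟩ := by
        rw [h, Matrix.mul_diagonal]
      rw [h2, pow_succ]
      exact mul_dvd_mul (h1 p) dvd_rfl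
  have hone : (a ⟨i, j'⟩).natAbs = 1 := by
    by_contra hne
    rcases Nat.lt_or_ge (a ⟨i, j'⟩).natAbs 2 with hlt | hge
    · have h0a : (a ⟨i, j'⟩).natAbs = 0 := by omega
      have ha0 : a ⟨i, j'⟩ = 0 := Int.natAbs_eq_zero.mp h0a
      have := key 1 ⟨i, r⟩
      rw [pow_one, ha0] at this
      exact hb (zero_dvd_iff.mp this)
    · set m := (Matrix.blockDiagonal' Bs ⟨i, r⟩ ⟨i, j'⟩).natAbs with hm
      have hd := key m ⟨i, r⟩
      have hdvd := Int.natAbs_dvd_natAbs.mpr hd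
      rw [Int.natAbs_pow] at hdvd
      have hle : (a ⟨i, j'⟩).natAbs ^ m ≤ m :=
        Nat.le_of_dvd (Int.natAbs_pos.mpr hb) hdvd
      have h2m : 2 ^ m ≤ m := le_trans (Nat.pow_le_pow_left hge m) hle
      exact absurd h2m (Nat.lt_two_pow_self (n := m)).not_ge
  exact Int.natAbs_eq_iff.mp hone
end

section
/- Let M be a nonzero n×n integer matrix, let E and F be n×n integer matrices, and let a be an integer. If M = a·E·M·F, then a = ±1. -/
/-- Let `M ≠ 0` be an `n × n` integer matrix, `E` and `F` integer matrices and `a` an integer.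
If `M = a • (E * M * F)` then `a = ±1`. -/
theorem eq_smul_conj_imp_unit {m : ℕ} (M E F : Matrix (Fin m) (Fin m) ℤ)
    (hM : M ≠ 0) (a : ℤ) (h : M = a • (E * M * F)) :
    a = 1 ∨ a = -1 := by
  have key : ∀ s : ℕ, M = a ^ s • (E ^ s * M * F ^ s) := by
    intro s
    induction s with
    | zero => simp
    | succ k ih =>
      calc M = a • (E * M * F) := h
        _ = a • (E * (a ^ k • (E ^ k * M * F ^ k)) * F) := by rw [← ih]
        _ = a ^ (k + 1) • (E ^ (k + 1) * M * F ^ (k + 1)) := by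
            rw [Matrix.mul_smul, Matrix.smul_mul, smul_smul, pow_succ]
            ring_nf
            congr 1
            rw [add_comm 1 k, pow_succ F, pow_succ' E]
            noncomm_ring
  obtain ⟨i, j, hij⟩ : ∃ i j, M i j ≠ 0 := by
    by_contra hc
    push_neg at hc
    exact hM (by ext i j; simp [hc])
  have hdvd : ∀ s : ℕ, a ^ s ∣ M i j := by
    intro s
    refine ⟨(E ^ s * M * F ^ s) i j, ?_⟩
    conv_lhs => rw [key s]
    simp [Matrix.smul_apply]
  have hua : IsUnit a := by
    by_contra hu
    have ha0 : a ≠ 0 := by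
      rintro rfl
      exact hij (by simpa using hdvd 1)
    have h1 : a ≠ 1 := fun e => hu (e ▸ isUnit_one)
    have hm1 : a ≠ -1 := fun e => hu (by simp [e])
    have h2 : 2 ≤ |a| := by
      rcases le_or_gt 0 a with hp | hn
      · rw [abs_of_nonneg hp]; omega
      · rw [abs_of_neg hn]; omega
    set s := (M i j).natAbs + 1 with hs
    have hle : |a| ^ s ≤ |M i j| := by
      have := Int.le_of_dvd (abs_pos.mpr hij) ((abs_dvd _ _).mpr ((dvd_abs _ _).mpr (hdvd s)))
      simpa [abs_pow] using this
    have hgt : |M i j| < |a| ^ s := by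
      calc |M i j| ≤ ((M i j).natAbs : ℤ) := (Int.abs_eq_natAbs _).le
        _ < (2 : ℤ) ^ s := by
            exact_mod_cast Nat.lt_of_lt_of_le Nat.lt_two_pow_self
              (Nat.pow_le_pow_right (by norm_num) (Nat.le_succ _))
        _ ≤ |a| ^ s := pow_le_pow_left₀ (by norm_num) h2 s
    omega
  exact Int.isUnit_iff.mp hua
end

section
/- Let N be a nonzero indecomposable skew-symmetric n×n rational matrix and let A = diag(a_1, …, a_n) be a diagonal rational matrix. If the product N·A is also skew-symmetric, then a_1 = a_2 = ⋯ = a_n, i.e., A is a scalar matrix. -/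
open Matrix

/-! Comparing entry `(i, j)` of `(N * diagonal a)ᵀ = -(N * diagonal a)` with `Nᵀ = -N` gives
`N i j * a i = N i j * a j`, so `a` is constant along the nonzero entries of `N`. A level set of `a`
is then a union of blocks of `N`, which for indecomposable `N` must be everything. -/

theorem Matrix.eq_of_skew_mul_diagonal_of_ne_zero {n R : Type*} [DecidableEq n] [Fintype n] [Ring R]
    [NoZeroDivisors R] {N : Matrix n n R} (hskew : Nᵀ = -N) {a : n → R}
    (h : (N * diagonal a)ᵀ = -(N * diagonal a)) {i j : n} (hij : N i j ≠ 0) : a i = a j := by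
  have hND : N j i * a i = -(N i j * a j) := by
    simpa [mul_diagonal] using congrFun (congrFun h i) j
  have hN : N j i = -N i j := congrFun (congrFun hskew i) j
  rw [hN, neg_mul, neg_inj] at hND
  exact mul_left_cancel₀ hij hND

theorem apply_eq_of_not_decomposable {n R β : Type*} [Zero R] {A : Matrix n n R}
    (hind : ¬ Decomposable A) {f : n → β} (hf : ∀ i j, A i j ≠ 0 → f i = f j) (i j : n) :
    f i = f j := by
  by_contra hne
  refine hind ⟨{k | f k = f j}, ⟨j, rfl⟩, ⟨i, hne⟩, fun x y hxy => ?_⟩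
  by_contra hxy0
  have hfxy := hf x y hxy0
  rcases hxy with ⟨hx, hy⟩ | ⟨hx, hy⟩
  · exact hy (hfxy.symm.trans hx)
  · exact hx (hfxy.trans hy)

theorem skew_mul_diagonal_scalar_general {m : ℕ} (N : Matrix (Fin m) (Fin m) ℚ)
    (hind : ¬ Decomposable N) (hskew : Nᵀ = -N)
    (a : Fin m → ℚ)
    (h : (N * Matrix.diagonal a)ᵀ = -(N * Matrix.diagonal a)) :
    ∀ i j, a i = a j :=
  apply_eq_of_not_decomposable hind fun _ _ => eq_of_skew_mul_diagonal_of_ne_zero hskew h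

/-- Let `N ≠ 0` be an indecomposable skew-symmetric rational matrix and
`A = diag(a₁, …, aₙ)` a diagonal rational matrix.  If `N * A` is also skew-symmetric,
then all the `aᵢ` are equal, i.e. `A` is a scalar matrix. -/
theorem skew_mul_diagonal_scalar {m : ℕ} (N : Matrix (Fin m) (Fin m) ℚ)
    (hN0 : N ≠ 0) (hind : ¬ Decomposable N) (hskew : Nᵀ = -N)
    (a : Fin m → ℚ)
    (h : (N * Matrix.diagonal a)ᵀ = -(N * Matrix.diagonal a)) :
    ∀ i j, a i = a j :=
  skew_mul_diagonal_scalar_general N hind hskew a h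
end

section
/- Let b = (b_1, …, b_n) and b′ = (b′_1, …, b′_n) be vectors in ℤⁿ. If, in the field of rational functions ℚ(z_1, …, z_n), the quotient (∏_{i=1}^n z_i^{[b_i]_+} + ∏_{i=1}^n z_i^{[−b_i]_+}) / (∏_{i=1}^n z_i^{[b′_i]_+} + ∏_{i=1}^n z_i^{[−b′_i]_+}) belongs to the ring of integer Laurent polynomials ℤ[z_1^{±1}, …, z_n^{±1}], then there exists an integer a such that b = a·b′, i.e., b_i = a·b′_i for all i. -/
open MvPolynomial

private lemma int_toNat_sub' (m : ℤ) : (m.toNat : ℤ) - ((-m).toNat : ℤ) = m := by omega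

private lemma sum_two_point {n : ℕ} (i j : Fin n) (hne : i ≠ j) (x y : ℚ) (v : Fin n → ℚ) :
    ∑ l, (if l = i then x else if l = j then y else 0) * v l = x * v i + y * v j := by
  classical
  have key : ∀ l, (if l = i then x else if l = j then y else 0) * v l
      = (if l = i then x * v l else 0) + (if l = j then y * v l else 0) := by
    intro l
    by_cases h1 : l = i
    · subst h1; simp [hne]
    · by_cases h2 : l = j <;> simp [h1, h2, Ne.symm hne]
  simp only [key, Finset.sum_add_distrib, Finset.sum_ite_eq', Finset.mem_univ, if_true]

private lemma sum_one_point {n : ℕ} (j : Fin n) (y : ℚ) (v : Fin n → ℚ) :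
    ∑ l, (if l = j then y else 0) * v l = y * v j := by
  classical
  have key : ∀ l, (if l = j then y else 0) * v l = (if l = j then y * v l else 0) := by
    intro l; by_cases h : l = j <;> simp [h]
  simp only [key, Finset.sum_ite_eq', Finset.mem_univ, if_true]

private lemma prod_pow_eq_monomial' {n : ℕ} (e : Fin n → ℕ) :
    (∏ i, (X i : MvPolynomial (Fin n) ℚ) ^ e i)
      = monomial (Finsupp.equivFunOnFinite.symm e) 1 := by
  classical
  rw [← prod_X_pow_eq_monomial]
  refine (Finset.prod_congr rfl fun x _ => by simp).trans
    (Finset.prod_subset (Finset.subset_univ _) fun x _ hx => ?_).symm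
  have h0 : (Finsupp.equivFunOnFinite.symm e) x = 0 := Finsupp.notMem_support_iff.mp hx
  simp [h0]

private lemma laurent_mem_aux {n : ℕ} (x : FractionRing (MvPolynomial (Fin n) ℚ))
    (hx : x ∈ Subring.closure
        (Set.range (fun i : Fin n =>
            algebraMap (MvPolynomial (Fin n) ℚ) (FractionRing (MvPolynomial (Fin n) ℚ)) (X i)) ∪
         Set.range (fun i : Fin n =>
            (algebraMap (MvPolynomial (Fin n) ℚ) (FractionRing (MvPolynomial (Fin n) ℚ))
              (X i))⁻¹))) :
    ∃ (p : MvPolynomial (Fin n) ℤ) (d : Fin n → ℕ),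
      x * algebraMap (MvPolynomial (Fin n) ℚ) (FractionRing (MvPolynomial (Fin n) ℚ))
          (∏ i, (X i : MvPolynomial (Fin n) ℚ) ^ d i)
        = algebraMap (MvPolynomial (Fin n) ℚ) (FractionRing (MvPolynomial (Fin n) ℚ))
            (MvPolynomial.map (Int.castRingHom ℚ) p) := by
  classical
  set φ := algebraMap (MvPolynomial (Fin n) ℚ) (FractionRing (MvPolynomial (Fin n) ℚ)) with hφ
  have hinj : Function.Injective φ := IsFractionRing.injective _ _
  have hmap : ∀ d : Fin n → ℕ,
      MvPolynomial.map (Int.castRingHom ℚ) (∏ i, (X i : MvPolynomial (Fin n) ℤ) ^ d i)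
        = ∏ i, (X i : MvPolynomial (Fin n) ℚ) ^ d i := by
    intro d; rw [map_prod]; simp
  induction hx using Subring.closure_induction with
  | mem z hz =>
      rcases hz with ⟨i, rfl⟩ | ⟨i, rfl⟩
      · exact ⟨X i, 0, by simp⟩
      · refine ⟨1, fun j => if j = i then 1 else 0, ?_⟩
        have h1 : (∏ j, (X j : MvPolynomial (Fin n) ℚ) ^ (if j = i then 1 else 0)) = X i := by
          have key : ∀ j, (X j : MvPolynomial (Fin n) ℚ) ^ (if j = i then 1 else 0)
              = (if j = i then X j else 1) := by intro j; by_cases h : j = i <;> simp [h]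
          simp only [key, Finset.prod_ite_eq', Finset.mem_univ, if_true]
        have hx0 : φ (X i) ≠ 0 := fun h0 =>
          (X_ne_zero (R := ℚ) i) (hinj (by rw [h0, map_zero]))
        rw [h1, inv_mul_cancel₀ hx0]
        simp
  | zero => exact ⟨0, 0, by simp⟩
  | one => exact ⟨1, 0, by simp⟩
  | add u v hu hv ihu ihv =>
      obtain ⟨p1, d1, h1⟩ := ihu
      obtain ⟨p2, d2, h2⟩ := ihv
      refine ⟨p1 * ∏ i, (X i : MvPolynomial (Fin n) ℤ) ^ d2 i
              + p2 * ∏ i, (X i : MvPolynomial (Fin n) ℤ) ^ d1 i,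
              fun i => d1 i + d2 i, ?_⟩
      have hAB : (∏ i, (X i : MvPolynomial (Fin n) ℚ) ^ (d1 i + d2 i))
          = (∏ i, (X i : MvPolynomial (Fin n) ℚ) ^ d1 i)
            * (∏ i, (X i : MvPolynomial (Fin n) ℚ) ^ d2 i) := by
        rw [← Finset.prod_mul_distrib]
        exact Finset.prod_congr rfl fun i _ => pow_add _ _ _
      simp only [hAB, map_add, map_mul, hmap]
      linear_combination
        (φ (∏ i, (X i : MvPolynomial (Fin n) ℚ) ^ d2 i)) * h1
        + (φ (∏ i, (X i : MvPolynomial (Fin n) ℚ) ^ d1 i)) * h2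
  | neg u hu ihu =>
      obtain ⟨p1, d1, h1⟩ := ihu
      exact ⟨-p1, d1, by rw [map_neg, map_neg, neg_mul, h1]⟩
  | mul u v hu hv ihu ihv =>
      obtain ⟨p1, d1, h1⟩ := ihu
      obtain ⟨p2, d2, h2⟩ := ihv
      refine ⟨p1 * p2, fun i => d1 i + d2 i, ?_⟩
      have hAB : (∏ i, (X i : MvPolynomial (Fin n) ℚ) ^ (d1 i + d2 i))
          = (∏ i, (X i : MvPolynomial (Fin n) ℚ) ^ d1 i)
            * (∏ i, (X i : MvPolynomial (Fin n) ℚ) ^ d2 i) := by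
        rw [← Finset.prod_mul_distrib]
        exact Finset.prod_congr rfl fun i _ => pow_add _ _ _
      simp only [hAB, map_mul]
      linear_combination (φ (∏ i, (X i : MvPolynomial (Fin n) ℚ) ^ d2 i)) * v * h1 + φ (MvPolynomial.map (Int.castRingHom ℚ) p1) * h2

private lemma key_complex {n : ℕ} (b b' : Fin n → ℤ) (d : Fin n → ℕ) (p : MvPolynomial (Fin n) ℚ)
    (E : (∏ i, (X i : MvPolynomial (Fin n) ℚ) ^ (b i).toNat +
          ∏ i, (X i : MvPolynomial (Fin n) ℚ) ^ (-(b i)).toNat) *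
         (∏ i, (X i : MvPolynomial (Fin n) ℚ) ^ d i)
       = p * (∏ i, (X i : MvPolynomial (Fin n) ℚ) ^ (b' i).toNat +
          ∏ i, (X i : MvPolynomial (Fin n) ℚ) ^ (-(b' i)).toNat))
    (c : Fin n → ℚ) (hc1 : ∑ i, c i * ((b' i : ℤ) : ℚ) = 1)
    (hc2 : ∀ k : ℤ, (∑ i, c i * ((b i : ℤ) : ℚ)) ≠ 2 * k + 1) : False := by
  classical
  set θ : Fin n → ℂ := fun i => ((Real.pi : ℂ) * Complex.I) * (c i : ℂ) with hθ
  have hpiI : ((Real.pi : ℂ) * Complex.I) ≠ 0 :=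
    mul_ne_zero (Complex.ofReal_ne_zero.2 Real.pi_ne_zero) Complex.I_ne_zero
  have hev : ∀ e : Fin n → ℕ,
      aeval (fun i => Complex.exp (θ i)) (∏ i, (X i : MvPolynomial (Fin n) ℚ) ^ e i)
        = Complex.exp (∑ i, θ i * (e i : ℂ)) := by
    intro e
    rw [map_prod, Complex.exp_sum]
    refine Finset.prod_congr rfl fun i _ => ?_
    rw [map_pow, aeval_X, mul_comm (θ i), Complex.exp_nat_mul]
  have E2 := congrArg (aeval (fun i => Complex.exp (θ i))) E
  simp only [map_mul, map_add, hev] at E2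
  have hdiff : ∀ v : Fin n → ℤ,
      (∑ i, θ i * ((v i).toNat : ℂ)) = (∑ i, θ i * (((-(v i)).toNat : ℕ) : ℂ))
        + ((Real.pi : ℂ) * Complex.I) * ((∑ i, c i * ((v i : ℤ) : ℚ) : ℚ) : ℂ) := by
    intro v
    have key : ∀ i : Fin n, ((v i).toNat : ℂ) - (((-(v i)).toNat : ℕ) : ℂ) = ((v i : ℤ) : ℂ) := by
      intro i; exact_mod_cast congrArg (Int.cast : ℤ → ℂ) (int_toNat_sub' (v i))
    have : (∑ i, θ i * ((v i).toNat : ℂ)) - (∑ i, θ i * (((-(v i)).toNat : ℕ) : ℂ))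
        = ((Real.pi : ℂ) * Complex.I) * ((∑ i, c i * ((v i : ℤ) : ℚ) : ℚ) : ℂ) := by
      rw [← Finset.sum_sub_distrib]
      push_cast
      rw [Finset.mul_sum]
      refine Finset.sum_congr rfl fun i _ => ?_
      rw [← mul_sub]
      have k2 : ((v i).toNat : ℂ) - (((-(v i)).toNat : ℕ) : ℂ) = ((v i : ℤ) : ℂ) := key i
      push_cast at k2
      rw [k2, hθ]
      ring
    linear_combination this
  set S : ℚ := ∑ i, c i * ((b i : ℤ) : ℚ) with hS
  -- right side vanishes
  have hright : Complex.exp (∑ i, θ i * (((b' i).toNat : ℕ) : ℂ))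
      + Complex.exp (∑ i, θ i * (((-(b' i)).toNat : ℕ) : ℂ)) = 0 := by
    rw [hdiff b', hc1]
    rw [Complex.exp_add]
    push_cast
    rw [mul_one, Complex.exp_pi_mul_I]
    ring
  -- left side is nonzero
  have hleft : Complex.exp (∑ i, θ i * (((b i).toNat : ℕ) : ℂ))
      + Complex.exp (∑ i, θ i * (((-(b i)).toNat : ℕ) : ℂ)) ≠ 0 := by
    rw [hdiff b, Complex.exp_add]
    intro h0
    have hexp : Complex.exp (((Real.pi : ℂ) * Complex.I) * (S : ℂ)) = -1 := by
      have hfactor : Complex.exp (∑ i, θ i * (((-(b i)).toNat : ℕ) : ℂ))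
          * (Complex.exp (((Real.pi : ℂ) * Complex.I) * (S : ℂ)) + 1) = 0 := by
        linear_combination h0
      rcases mul_eq_zero.mp hfactor with h | h
      · exact absurd h (Complex.exp_ne_zero _)
      · linear_combination h
    have h1 : Complex.exp (((Real.pi : ℂ) * Complex.I) * (S : ℂ) + (Real.pi : ℂ) * Complex.I)
        = 1 := by
      rw [Complex.exp_add, hexp, Complex.exp_pi_mul_I]; ring
    obtain ⟨k, hk⟩ := Complex.exp_eq_one_iff.mp h1
    have h2 : ((Real.pi : ℂ) * Complex.I) * ((S : ℂ) + 1)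
        = ((Real.pi : ℂ) * Complex.I) * ((2 * k : ℤ) : ℂ) := by
      push_cast
      linear_combination hk
    have h3 : (S : ℂ) + 1 = ((2 * k : ℤ) : ℂ) := mul_left_cancel₀ hpiI h2
    have h4 : S = 2 * ((k - 1 : ℤ) : ℚ) + 1 := by
      have : S + 1 = ((2 * k : ℤ) : ℚ) := by exact_mod_cast h3
      push_cast at this ⊢
      linarith
    exact hc2 (k - 1) h4
  -- contradiction
  rw [hright, mul_zero] at E2
  exact (mul_ne_zero hleft (Complex.exp_ne_zero _)) E2


/-- Let `b, b' ∈ ℤⁿ`.  If, in the field of rational functions `ℚ(z₁, …, zₙ)` (realized as the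
fraction field of `ℚ[z₁, …, zₙ]`), the quotient
`(∏ᵢ zᵢ^{[bᵢ]₊} + ∏ᵢ zᵢ^{[-bᵢ]₊}) / (∏ᵢ zᵢ^{[b'ᵢ]₊} + ∏ᵢ zᵢ^{[-b'ᵢ]₊})`
lies in the ring of integer Laurent polynomials `ℤ[z₁^{±1}, …, zₙ^{±1}]` (the subring
generated by the variables and their inverses), then `b = a • b'` for some integer `a`.
(Here `[x]₊ = max x 0`, and for `x : ℤ` the natural number `x.toNat` equals `max x 0`.) -/
theorem quotient_laurent_imp_proportional {n : ℕ} (b b' : Fin n → ℤ)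
    (h : (algebraMap (MvPolynomial (Fin n) ℚ) (FractionRing (MvPolynomial (Fin n) ℚ))
            (∏ i, (X i : MvPolynomial (Fin n) ℚ) ^ (b i).toNat +
              ∏ i, (X i : MvPolynomial (Fin n) ℚ) ^ (-(b i)).toNat)) /
        (algebraMap (MvPolynomial (Fin n) ℚ) (FractionRing (MvPolynomial (Fin n) ℚ))
            (∏ i, (X i : MvPolynomial (Fin n) ℚ) ^ (b' i).toNat +
              ∏ i, (X i : MvPolynomial (Fin n) ℚ) ^ (-(b' i)).toNat)) ∈
      Subring.closure
        (Set.range (fun i : Fin n =>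
            algebraMap (MvPolynomial (Fin n) ℚ) (FractionRing (MvPolynomial (Fin n) ℚ)) (X i)) ∪
         Set.range (fun i : Fin n =>
            (algebraMap (MvPolynomial (Fin n) ℚ) (FractionRing (MvPolynomial (Fin n) ℚ))
              (X i))⁻¹))) :
    ∃ a : ℤ, ∀ i, b i = a * b' i := by
  classical
  by_cases hb : ∀ i, b i = 0
  · exact ⟨0, fun i => by simp [hb i]⟩
  push_neg at hb
  obtain ⟨i₀, hi₀⟩ := hb
  have hinj : Function.Injective
      (algebraMap (MvPolynomial (Fin n) ℚ) (FractionRing (MvPolynomial (Fin n) ℚ))) :=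
    IsFractionRing.injective _ _
  have hQne : (∏ i, (X i : MvPolynomial (Fin n) ℚ) ^ (b' i).toNat +
      ∏ i, (X i : MvPolynomial (Fin n) ℚ) ^ (-(b' i)).toNat) ≠ 0 := by
    intro h0
    have := congrArg (eval (fun _ : Fin n => (1 : ℚ))) h0
    simp at this
  have hφQ : algebraMap (MvPolynomial (Fin n) ℚ) (FractionRing (MvPolynomial (Fin n) ℚ))
      (∏ i, (X i : MvPolynomial (Fin n) ℚ) ^ (b' i).toNat +
        ∏ i, (X i : MvPolynomial (Fin n) ℚ) ^ (-(b' i)).toNat) ≠ 0 :=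
    fun h0 => hQne (hinj (by rw [h0, map_zero]))
  obtain ⟨p, d, hpd⟩ := laurent_mem_aux _ h
  rw [div_mul_eq_mul_div, div_eq_iff hφQ, ← map_mul, ← map_mul] at hpd
  have E := hinj hpd
  by_cases hb' : ∀ j, b' j = 0
  · -- parity contradiction
    exfalso
    have hQ2 : (∏ i, (X i : MvPolynomial (Fin n) ℚ) ^ (b' i).toNat +
        ∏ i, (X i : MvPolynomial (Fin n) ℚ) ^ (-(b' i)).toNat) = 2 := by
      simp [hb']
      norm_num
    rw [hQ2] at E
    set u : Fin n →₀ ℕ := Finsupp.equivFunOnFinite.symm (fun i => (b i).toNat) with hu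
    set w : Fin n →₀ ℕ := Finsupp.equivFunOnFinite.symm (fun i => (-(b i)).toNat) with hw
    set δ : Fin n →₀ ℕ := Finsupp.equivFunOnFinite.symm d with hδ
    have hPM : (∏ i, (X i : MvPolynomial (Fin n) ℚ) ^ (b i).toNat +
        ∏ i, (X i : MvPolynomial (Fin n) ℚ) ^ (-(b i)).toNat) *
        (∏ i, (X i : MvPolynomial (Fin n) ℚ) ^ d i)
        = monomial (u + δ) 1 + monomial (w + δ) 1 := by
      rw [prod_pow_eq_monomial', prod_pow_eq_monomial', prod_pow_eq_monomial',
        add_mul, monomial_mul, monomial_mul, one_mul]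
    rw [hPM] at E
    have hne : w + δ ≠ u + δ := by
      intro hEq
      have h1 : w = u := add_right_cancel hEq
      have h2 := congrArg (fun f : Fin n →₀ ℕ => f i₀) h1
      simp only [hu, hw, Finsupp.coe_equivFunOnFinite_symm] at h2
      omega
    have hcoeff := congrArg (coeff (u + δ)) E
    rw [coeff_add, coeff_monomial, coeff_monomial, if_pos rfl, if_neg hne] at hcoeff
    have h2C : (2 : MvPolynomial (Fin n) ℚ) = C (2 : ℚ) := (map_ofNat C 2).symm
    rw [mul_comm, h2C, coeff_C_mul, coeff_map] at hcoeff
    have h1q : (1 : ℚ) = 2 * ((p.coeff (u + δ) : ℤ) : ℚ) := by simpa using hcoeff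
    have h1z : (1 : ℤ) = 2 * p.coeff (u + δ) := by exact_mod_cast h1q
    omega
  push_neg at hb'
  obtain ⟨j₀, hj₀⟩ := hb'
  by_cases hm : ∀ i, b i * b' j₀ = b j₀ * b' i
  · by_cases hdvd : b' j₀ ∣ b j₀
    · obtain ⟨a, ha⟩ := hdvd
      refine ⟨a, fun i => ?_⟩
      have h1 := hm i
      have h2 : b' j₀ * b i = b' j₀ * (a * b' i) := by
        rw [mul_comm (b' j₀) (b i), h1, ha]; ring
      exact mul_left_cancel₀ hj₀ h2
    · exfalso
      have hq : ((b' j₀ : ℤ) : ℚ) ≠ 0 := Int.cast_ne_zero.mpr hj₀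
      refine key_complex b b' d _ E (fun l => if l = j₀ then 1 / ((b' j₀ : ℤ) : ℚ) else 0) ?_ ?_
      · rw [sum_one_point]
        field_simp
      · rw [sum_one_point]
        intro k hk
        apply hdvd
        refine ⟨2 * k + 1, ?_⟩
        have : ((b j₀ : ℤ) : ℚ) = ((b' j₀ * (2 * k + 1) : ℤ) : ℚ) := by
          push_cast
          field_simp at hk
          linarith
        exact_mod_cast this
  · push_neg at hm
    obtain ⟨i₁, hi₁⟩ := hm
    exfalso
    have hne : i₁ ≠ j₀ := by
      rintro rfl
      exact hi₁ rfl
    set D : ℚ := ((b i₁ : ℤ) : ℚ) * ((b' j₀ : ℤ) : ℚ) - ((b j₀ : ℤ) : ℚ) * ((b' i₁ : ℤ) : ℚ)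
      with hD
    have hDne : D ≠ 0 := by
      rw [hD, sub_ne_zero]
      intro hEq
      exact hi₁ (by exact_mod_cast hEq)
    refine key_complex b b' d _ E
      (fun l => if l = i₁ then -((b j₀ : ℤ) : ℚ) / D else
        if l = j₀ then ((b i₁ : ℤ) : ℚ) / D else 0) ?_ ?_
    · rw [sum_two_point _ _ hne]
      field_simp [hD]
      ring
    · rw [sum_two_point _ _ hne]
      intro k hk
      have h0 : -((b j₀ : ℤ) : ℚ) / D * ((b i₁ : ℤ) : ℚ)
          + ((b i₁ : ℤ) : ℚ) / D * ((b j₀ : ℤ) : ℚ) = 0 := by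
        field_simp
        ring
      rw [h0] at hk
      have : (0 : ℚ) = ((2 * k + 1 : ℤ) : ℚ) := by push_cast; linarith [hk]
      have h2 : (0 : ℤ) = 2 * k + 1 := by exact_mod_cast this
      omega
end
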